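/- arXiv:2107.05310 — 7 statements merged into one kernel-verified Lean document; each statement's English description precedes it below -/
import Mathlib

section
/- Let ξ^n, ξ : [0,∞) → ℝ (n ≥ 1) be continuous functions with ξ^n_0 = ξ_0 = 0 such that ξ^n → ξ uniformly on compact subsets of [0,∞) as n → ∞, and let x > 0. Then the swallowing times satisfy ζ_x ≤ liminf_{n→∞} ζ^n_x, where ζ_x and ζ^n_x denote the swallowing times of x for the Loewner trajectories driven by ξ and by ξ^n respectively. -/
open MeasureTheory Filter Set

/-- `IsLoewnerTraj ξ x ζ g` says that `g` restricted to `[0, ζ)` is the maximal solution of the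
real Loewner ODE `g_t = x + ∫₀ᵗ 2/(g_s − ξ_s) ds` with `g_t > ξ_t` for `t < ζ`;
maximality means that if `ζ < ∞` then `liminf_{t → ζ⁻} (g_t − ξ_t) = 0`. -/
structure IsLoewnerTraj (ξ : ℝ → ℝ) (x : ℝ) (ζ : EReal) (g : ℝ → ℝ) : Prop where
  pos : 0 < ζ
  cont : ContinuousOn g {t : ℝ | 0 ≤ t ∧ (t : EReal) < ζ}
  gt : ∀ t : ℝ, 0 ≤ t → (t : EReal) < ζ → ξ t < g t
  ode : ∀ t : ℝ, 0 ≤ t → (t : EReal) < ζ →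
    g t = x + ∫ s in (0:ℝ)..t, 2 / (g s - ξ s)
  maximal : ζ ≠ ⊤ →
    Filter.liminf (fun t => g t - ξ t) (nhdsWithin ζ.toReal (Set.Iio ζ.toReal)) = 0

/-!
Fix `t < ζ_x` and let `ε > 0` be the minimum of the gap `g_s − ξ_s` on `[0, t]`. Once `ξⁿ` is
uniformly `δ`-close to `ξ` on `[0, t]`, with `δ` exponentially small in `t / ε²`, the trajectory
`gⁿ` stays `ε/4`-close to `g` for as long as it lives before `t`: while it does, both gaps are at
least `ε/2`, where `y ↦ 2/y` is `8/ε²`-Lipschitz, so Grönwall's inequality keeps the difference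
below `ε/8`, and a continuity argument closes this bootstrap. The gap of `gⁿ` thus stays in a
compact subset of `(0, ∞)`, which maximality forbids if `ζⁿ_x ≤ t`.
-/

open Topology

theorem ContinuousOn.mapsTo_Icc_of_forall_Ico {α : Type*} [TopologicalSpace α] {f : ℝ → α}
    {U : Set α} {a b : ℝ} (hf : ContinuousOn f (Icc a b)) (hU : IsOpen U)
    (step : ∀ r ∈ Icc a b, MapsTo f (Ico a r) U → f r ∈ U) :
    MapsTo f (Icc a b) U := by
  by_contra hfU
  obtain ⟨s, hs, hsU⟩ := not_forall₂.1 hfU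
  set B := Icc a b ∩ f ⁻¹' Uᶜ
  have hB : IsClosed B := hf.preimage_isClosed_of_isClosed isClosed_Icc hU.isClosed_compl
  have hBbdd : BddBelow B := ⟨a, fun u hu => hu.1.1⟩
  have hr : sInf B ∈ B := hB.csInf_mem ⟨s, hs, hsU⟩ hBbdd
  refine hr.2 (step _ hr.1 fun u hu => ?_)
  by_contra huU
  exact (csInf_le hBbdd ⟨⟨hu.1, hu.2.le.trans hr.1.2⟩, huU⟩).not_gt hu.2

theorem abs_two_div_sub_two_div_le {a b c : ℝ} (hc : 0 < c) (ha : c ≤ a) (hb : c ≤ b) :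
    |2 / a - 2 / b| ≤ 2 / c ^ 2 * |a - b| := by
  have ha0 : 0 < a := hc.trans_le ha
  have hb0 : 0 < b := hc.trans_le hb
  have hab : c ^ 2 ≤ a * b := by nlinarith
  rw [div_sub_div _ _ ha0.ne' hb0.ne', abs_div, abs_of_pos (mul_pos ha0 hb0),
    show 2 * b - a * 2 = -2 * (a - b) by ring, abs_mul, abs_neg, abs_two, mul_comm (2 / c ^ 2),
    ← mul_div_assoc, mul_comm 2]
  exact div_le_div_of_nonneg_left (by positivity) (by positivity) hab

theorem hasDerivWithinAt_Ici_of_eq_add_integral {g h : ℝ → ℝ} {x a b s : ℝ}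
    (hh : ContinuousOn h (Ico a b)) (hg : ∀ u ∈ Ico a b, g u = x + ∫ v in a..u, h v)
    (hs : s ∈ Ico a b) :
    HasDerivWithinAt g (h s) (Ici s) s := by
  have hint : IntervalIntegrable h volume a s :=
    (hh.mono (uIcc_of_le hs.1 ▸ Icc_subset_Ico_right hs.2)).intervalIntegrable
  have hIoo : Ioo s b ∈ 𝓝[>] s := Ioo_mem_nhdsGT hs.2
  have hIoo_sub : Ioo s b ⊆ Ico a b := fun u hu => ⟨hs.1.trans hu.1.le, hu.2⟩
  have hmeas : StronglyMeasurableAtFilter h (𝓝[>] s) volume :=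
    ⟨Ioo s b, hIoo, (hh.mono hIoo_sub).aestronglyMeasurable measurableSet_Ioo⟩
  have hcont : ContinuousWithinAt h (Ioi s) s :=
    (hh s hs).mono_of_mem_nhdsWithin (mem_of_superset hIoo hIoo_sub)
  have hIco : Ico s b ∈ 𝓝[≥] s := Ico_mem_nhdsGE hs.2
  refine ((intervalIntegral.integral_hasDerivWithinAt_right hint hmeas hcont).const_add x)
    |>.congr_of_eventuallyEq (eventuallyEq_of_mem hIco fun u hu => ?_) (hg s hs)
  exact hg u ⟨hs.1.trans hu.1, hu.2⟩

namespace IsLoewnerTraj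

variable {ξ g : ℝ → ℝ} {x : ℝ} {ζ : EReal}

theorem coe_toReal (h : IsLoewnerTraj ξ x ζ g) (hζ : ζ ≠ ⊤) : ((ζ.toReal : ℝ) : EReal) = ζ :=
  EReal.coe_toReal hζ (ne_bot_of_gt h.pos)

theorem hasDerivWithinAt (h : IsLoewnerTraj ξ x ζ g) (hξ : ContinuousOn ξ (Ici 0)) {s : ℝ}
    (hs : 0 ≤ s) (hsζ : (s : EReal) < ζ) :
    HasDerivWithinAt g (2 / (g s - ξ s)) (Ici s) s := by
  obtain ⟨b, hsb, hbζ⟩ := EReal.lt_iff_exists_real_btwn.1 hsζ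
  have hsub : Ico 0 b ⊆ {t : ℝ | 0 ≤ t ∧ (t : EReal) < ζ} := fun u hu =>
    ⟨hu.1, (EReal.coe_lt_coe_iff.2 hu.2).trans hbζ⟩
  have hgap : ContinuousOn (fun u => 2 / (g u - ξ u)) (Ico 0 b) :=
    continuousOn_const.div ((h.cont.mono hsub).sub (hξ.mono fun u hu => hu.1)) fun u hu =>
      (sub_pos.2 (h.gt u (hsub hu).1 (hsub hu).2)).ne'
  exact hasDerivWithinAt_Ici_of_eq_add_integral hgap
    (fun u hu => h.ode u (hsub hu).1 (hsub hu).2) ⟨hs, EReal.coe_lt_coe_iff.1 hsb⟩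

theorem apply_zero (h : IsLoewnerTraj ξ x ζ g) : g 0 = x := by
  rw [h.ode 0 le_rfl h.pos, intervalIntegral.integral_same, add_zero]

theorem eq_top_of_gap_mem_Icc (h : IsLoewnerTraj ξ x ζ g) {c C : ℝ} (hc : 0 < c)
    (hgap : ∀ s : ℝ, 0 ≤ s → (s : EReal) < ζ → g s - ξ s ∈ Icc c C) : ζ = ⊤ := by
  by_contra hζ
  set T := ζ.toReal
  have hT : ((T : ℝ) : EReal) = ζ := h.coe_toReal hζ
  have hT0 : 0 < T := by exact_mod_cast hT ▸ h.pos
  have hnear : ∀ᶠ s in 𝓝[<] T, g s - ξ s ∈ Icc c C := by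
    filter_upwards [Ioo_mem_nhdsLT hT0] with s hs
    exact hgap s hs.1.le (hT ▸ EReal.coe_lt_coe_iff.2 hs.2)
  -- the upper bound `C` is what makes the `liminf` of real numbers meaningful
  have hbdd : IsBoundedUnder (· ≤ ·) (𝓝[<] T) (fun s => g s - ξ s) :=
    ⟨C, eventually_map.2 (hnear.mono fun s hs => hs.2)⟩
  have hlim := le_liminf_of_le hbdd.isCoboundedUnder_ge (hnear.mono fun s hs => hs.1)
  rw [h.maximal hζ] at hlim
  exact hlim.not_gt hc

end IsLoewnerTraj

theorem abs_sub_le_of_loewner_ode {ξ₁ ξ₂ g₁ g₂ : ℝ → ℝ} {T ε δ : ℝ} (hε : 0 < ε)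
    (hg₁ : ContinuousOn g₁ (Ico 0 T)) (hg₂ : ContinuousOn g₂ (Ico 0 T))
    (hg₁' : ∀ s ∈ Ico 0 T, HasDerivWithinAt g₁ (2 / (g₁ s - ξ₁ s)) (Ici s) s)
    (hg₂' : ∀ s ∈ Ico 0 T, HasDerivWithinAt g₂ (2 / (g₂ s - ξ₂ s)) (Ici s) s)
    (h0 : g₁ 0 = g₂ 0) (hgap : ∀ s ∈ Ico 0 T, ε ≤ g₂ s - ξ₂ s)
    (hξ : ∀ s ∈ Ico 0 T, |ξ₁ s - ξ₂ s| ≤ δ) (hδ : δ * Real.exp (8 / ε ^ 2 * T) ≤ ε / 8) :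
    ∀ s ∈ Ico 0 T, |g₁ s - g₂ s| ≤ ε / 4 := by
  intro b hb
  set L := 8 / ε ^ 2
  have hL : 0 < L := by positivity
  have hδ0 : 0 ≤ δ := (abs_nonneg _).trans (hξ b hb)
  have hδε : δ ≤ ε / 8 :=
    (le_mul_of_one_le_right hδ0 (Real.one_le_exp (by nlinarith [hb.1, hb.2]))).trans hδ
  have hIcc : Icc 0 b ⊆ Ico 0 T := fun u hu => ⟨hu.1, hu.2.trans_lt hb.2⟩
  have hcont : ContinuousOn (fun s => g₁ s - g₂ s) (Icc 0 b) := (hg₁.sub hg₂).mono hIcc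
  suffices MapsTo (fun s => |g₁ s - g₂ s|) (Icc 0 b) (Iio (ε / 4)) from
    (this ⟨hb.1, le_rfl⟩).le
  refine hcont.abs.mapsTo_Icc_of_forall_Ico isOpen_Iio fun r hr hclose => ?_
  have hrT : r ∈ Ico 0 T := hIcc hr
  have hIco : ∀ s ∈ Ico 0 r, s ∈ Ico 0 T := fun s hs => ⟨hs.1, hs.2.trans hrT.2⟩
  have hgaps : ∀ s ∈ Ico 0 r, ε / 2 ≤ g₁ s - ξ₁ s ∧ ε / 2 ≤ g₂ s - ξ₂ s := fun s hs => by
    have h₁ := abs_lt.1 (show |g₁ s - g₂ s| < ε / 4 from hclose hs)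
    have h₂ := abs_le.1 (hξ s (hIco s hs))
    have h₃ := hgap s (hIco s hs)
    constructor <;> linarith
  have hderiv : ∀ s ∈ Ico 0 r, ‖2 / (g₁ s - ξ₁ s) - 2 / (g₂ s - ξ₂ s)‖ ≤
      L * ‖g₁ s - g₂ s‖ + L * δ := fun s hs => by
    obtain ⟨h₁, h₂⟩ := hgaps s hs
    have hL' : 2 / (ε / 2) ^ 2 = L := by ring
    calc ‖2 / (g₁ s - ξ₁ s) - 2 / (g₂ s - ξ₂ s)‖
        ≤ L * |(g₁ s - g₂ s) - (ξ₁ s - ξ₂ s)| := by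
          simpa only [Real.norm_eq_abs, hL', sub_sub_sub_comm] using
            abs_two_div_sub_two_div_le (by positivity) h₁ h₂
      _ ≤ L * (|g₁ s - g₂ s| + δ) := by
          gcongr; exact (abs_sub _ _).trans (add_le_add_right (hξ s (hIco s hs)) _)
      _ = L * ‖g₁ s - g₂ s‖ + L * δ := by rw [Real.norm_eq_abs]; ring
  have hgronwall := norm_le_gronwallBound_of_norm_deriv_right_le (δ := 0)
    (hcont.mono (Icc_subset_Icc_right hr.2))
    (fun s hs => (hg₁' s (hIco s hs)).sub (hg₂' s (hIco s hs)))
    (by simp [h0]) hderiv r (right_mem_Icc.2 hr.1)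
  have hexp : Real.exp (L * r) ≤ Real.exp (L * T) := Real.exp_le_exp.2 (by nlinarith [hrT.2])
  show |g₁ r - g₂ r| < ε / 4
  calc |g₁ r - g₂ r| ≤ gronwallBound 0 L (L * δ) (r - 0) := hgronwall
    _ = δ * (Real.exp (L * r) - 1) := by
        simp only [gronwallBound_of_K_ne_0 hL.ne', sub_zero, zero_mul, zero_add,
          mul_div_cancel_left₀ _ hL.ne']
    _ < ε / 4 := by nlinarith

theorem IsLoewnerTraj.eventually_lt_of_tendstoUniformlyOn {ι : Type*} {l : Filter ι}
    {ξ : ι → ℝ → ℝ} {ξl : ℝ → ℝ} {x : ℝ} {ζ : ι → EReal} {g : ι → ℝ → ℝ} {ζl : EReal}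
    {gl : ℝ → ℝ} (hLl : IsLoewnerTraj ξl x ζl gl) (hL : ∀ n, IsLoewnerTraj (ξ n) x (ζ n) (g n))
    (hcl : ContinuousOn ξl (Ici 0)) (hc : ∀ n, ContinuousOn (ξ n) (Ici 0)) {t : ℝ}
    (ht : 0 ≤ t) (htζ : (t : EReal) < ζl) (hconv : TendstoUniformlyOn ξ ξl l (Icc 0 t)) :
    ∀ᶠ n in l, (t : EReal) < ζ n := by
  have hlt : ∀ s ∈ Icc 0 t, (s : EReal) < ζl := fun s hs =>
    (EReal.coe_le_coe_iff.2 hs.2).trans_lt htζ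
  have hgapc : ContinuousOn (fun s => gl s - ξl s) (Icc 0 t) :=
    (hLl.cont.mono fun s hs => ⟨hs.1, hlt s hs⟩).sub (hcl.mono fun s hs => hs.1)
  obtain ⟨s₀, hs₀, hmin⟩ := isCompact_Icc.exists_isMinOn (nonempty_Icc.2 ht) hgapc
  obtain ⟨M, hM⟩ := (isCompact_Icc.image_of_continuousOn hgapc).bddAbove
  set ε := gl s₀ - ξl s₀
  have hε : 0 < ε := sub_pos.2 (hLl.gt s₀ hs₀.1 (hlt s₀ hs₀))
  -- `δ` is chosen so that Grönwall's factor `exp (8 / ε ^ 2 * t)` only inflates it to `ε / 8`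
  set δ := ε / 8 * Real.exp (-(8 / ε ^ 2 * t))
  have hδ : 0 < δ := by positivity
  have hK : 0 ≤ 8 / ε ^ 2 := by positivity
  have hδε : δ ≤ ε / 8 :=
    mul_le_of_le_one_right (by positivity) (Real.exp_le_one_iff.2 (by nlinarith))
  filter_upwards [Metric.tendstoUniformlyOn_iff.1 hconv δ hδ] with n hn
  by_contra! hζt
  have hζtop : ζ n ≠ ⊤ := ne_top_of_le_ne_top (EReal.coe_ne_top t) hζt
  set T := (ζ n).toReal
  have hT : ((T : ℝ) : EReal) = ζ n := (hL n).coe_toReal hζtop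
  have hTt : T ≤ t := EReal.coe_le_coe_iff.1 (hT ▸ hζt)
  have hIco : ∀ s ∈ Ico 0 T, (s : EReal) < ζ n := fun s hs =>
    hT ▸ EReal.coe_lt_coe_iff.2 hs.2
  have hIcc : Ico 0 T ⊆ Icc 0 t := fun s hs => ⟨hs.1, hs.2.le.trans hTt⟩
  have hξ : ∀ s ∈ Icc 0 t, |ξ n s - ξl s| ≤ δ := fun s hs => by
    rw [abs_sub_comm, ← Real.dist_eq]; exact (hn s hs).le
  have hclose := abs_sub_le_of_loewner_ode hε
    ((hL n).cont.mono fun s hs => ⟨hs.1, hIco s hs⟩)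
    (hLl.cont.mono fun s hs => ⟨hs.1, hlt s (hIcc hs)⟩)
    (fun s hs => (hL n).hasDerivWithinAt (hc n) hs.1 (hIco s hs))
    (fun s hs => hLl.hasDerivWithinAt hcl hs.1 (hlt s (hIcc hs)))
    ((hL n).apply_zero.trans hLl.apply_zero.symm) (fun s hs => hmin (hIcc hs))
    (fun s hs => hξ s (hIcc hs)) ?_
  · refine hζtop ((hL n).eq_top_of_gap_mem_Icc (c := ε / 2) (C := M + ε / 4 + δ)
      (by positivity) fun s hs hsζ => ?_)
    have hsT : s ∈ Ico 0 T := ⟨hs, EReal.coe_lt_coe_iff.1 (hT ▸ hsζ)⟩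
    have h₁ := abs_le.1 (hclose s hsT)
    have h₂ := abs_le.1 (hξ s (hIcc hsT))
    have h₃ : ε ≤ gl s - ξl s := hmin (hIcc hsT)
    have h₄ : gl s - ξl s ≤ M := hM ⟨s, hIcc hsT, rfl⟩
    constructor <;> linarith
  · rw [mul_assoc, ← Real.exp_add]
    exact mul_le_of_le_one_right (by positivity) (Real.exp_le_one_iff.2 (by nlinarith))

theorem stmt0_general
    (ξ : ℕ → ℝ → ℝ) (ξl : ℝ → ℝ)
    (hc : ∀ n, ContinuousOn (ξ n) (Set.Ici 0))
    (hcl : ContinuousOn ξl (Set.Ici 0))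
    (hconv : ∀ T : ℝ, 0 ≤ T →
      TendstoUniformlyOn (fun n t => ξ n t) ξl Filter.atTop (Set.Icc 0 T))
    (x : ℝ)
    (ζ : ℕ → EReal) (g : ℕ → ℝ → ℝ) (ζl : EReal) (gl : ℝ → ℝ)
    (hL : ∀ n, IsLoewnerTraj (ξ n) x (ζ n) (g n))
    (hLl : IsLoewnerTraj ξl x ζl gl) :
    ζl ≤ Filter.liminf ζ Filter.atTop := by
  refine (le_liminf_iff).2 fun c hcζ => ?_
  obtain ⟨t, hct, htζ⟩ := EReal.lt_iff_exists_real_btwn.1 hcζ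
  have ht : 0 ≤ max t 0 := le_max_right t 0
  have htζ' : ((max t 0 : ℝ) : EReal) < ζl := by
    rcases max_choice t 0 with h | h <;> rw [h]
    exacts [htζ, hLl.pos]
  filter_upwards [hLl.eventually_lt_of_tendstoUniformlyOn hL hcl hc ht htζ' (hconv _ ht)]
    with n hn
  exact hct.trans_le (EReal.coe_le_coe_iff.2 (le_max_left t 0)) |>.trans hn

/-- If continuous driving functions `ξⁿ` (vanishing at `0`) converge to `ξ` uniformly on
compact subsets of `[0,∞)`, then for `x > 0` the swallowing times satisfy
`ζ_x ≤ liminf_n ζⁿ_x`. -/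
theorem stmt0
    (ξ : ℕ → ℝ → ℝ) (ξl : ℝ → ℝ)
    (hc : ∀ n, ContinuousOn (ξ n) (Set.Ici 0))
    (hcl : ContinuousOn ξl (Set.Ici 0))
    (h0 : ∀ n, ξ n 0 = 0) (h0l : ξl 0 = 0)
    (hconv : ∀ T : ℝ, 0 ≤ T →
      TendstoUniformlyOn (fun n t => ξ n t) ξl Filter.atTop (Set.Icc 0 T))
    (x : ℝ) (hx : 0 < x)
    (ζ : ℕ → EReal) (g : ℕ → ℝ → ℝ) (ζl : EReal) (gl : ℝ → ℝ)
    (hL : ∀ n, IsLoewnerTraj (ξ n) x (ζ n) (g n))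
    (hLl : IsLoewnerTraj ξl x ζl gl) :
    ζl ≤ Filter.liminf ζ Filter.atTop :=
  stmt0_general ξ ξl hc hcl hconv x ζ g ζl gl hL hLl
end

section
/- Let ξ : [0,∞) → ℝ be continuous, let x > ξ_0 and let t < ζ_x. Then lim_{y↓x} (g_t(y) − g_t(x))/(y − x) = exp( −2 ∫₀ᵗ (g_s(x) − ξ_s)^{−2} ds ); that is, the Loewner flow map y ↦ g_t(y) is right-differentiable at x with derivative exp(−2 ∫₀ᵗ (g_s(x) − ξ_s)^{−2} ds). (Note that for y > x the trajectory g(y) is defined at least up to time ζ_x, so the difference quotient makes sense for all y > x.) -/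
open MeasureTheory Filter Set

/-!
For `y > x` the difference `D = g^y - g^x` solves the linear equation
`D' = -2 D / ((g^y - ξ) (g^x - ξ))`, so `D_t = (y - x) exp (-∫₀ᵗ 2 / ((g^y - ξ) (g^x - ξ)))`.
Hence `0 < D ≤ y - x`: the trajectory of `y` stays at least as far from the driver as that of `x`
(so `ζ_x ≤ ζ_y`), and the integrand converges uniformly to `2 / (g^x - ξ)²` as `y ↓ x`.
-/

open Topology

theorem ContinuousOn.hasDerivWithinAt_integral_Ici {f : ℝ → ℝ} {r b : ℝ}
    (hf : ContinuousOn f (Icc 0 r)) (hb : b ∈ Ico 0 r) :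
    HasDerivWithinAt (fun u => ∫ s in (0:ℝ)..u, f s) (f b) (Ici b) b := by
  have hmem : Icc 0 r ∈ 𝓝[>] b := nhdsWithin_mono b Ioi_subset_Ici_self (Icc_mem_nhdsGE_of_mem hb)
  refine intervalIntegral.integral_hasDerivWithinAt_right (t := Ioi b) ?_ ?_ ?_
  · exact (hf.mono (uIcc_of_le hb.1 ▸ Icc_subset_Icc le_rfl hb.2.le)).intervalIntegrable
  · exact ⟨Icc 0 r, hmem, hf.aestronglyMeasurable measurableSet_Icc⟩
  · exact (hf b (Ico_subset_Icc_self hb)).mono_of_mem_nhdsWithin hmem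

theorem ContinuousOn.continuousOn_integral_Icc {f : ℝ → ℝ} {r : ℝ} (hr : 0 ≤ r)
    (hf : ContinuousOn f (Icc 0 r)) :
    ContinuousOn (fun u => ∫ s in (0:ℝ)..u, f s) (Icc 0 r) := by
  rw [← uIcc_of_le hr] at hf ⊢
  exact intervalIntegral.continuousOn_primitive_interval hf.integrableOn_uIcc

theorem eq_mul_exp_neg_integral_of_hasDerivWithinAt {D a : ℝ → ℝ} {r s : ℝ}
    (hD : ContinuousOn D (Icc 0 r)) (ha : ContinuousOn a (Icc 0 r))
    (hD' : ∀ b ∈ Ico 0 r, HasDerivWithinAt D (-(a b * D b)) (Ici b) b) (hs : s ∈ Icc 0 r) :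
    D s = D 0 * Real.exp (-∫ u in (0:ℝ)..s, a u) := by
  set A := fun s => ∫ u in (0:ℝ)..s, a u
  have hA : ContinuousOn A (Icc 0 r) := ha.continuousOn_integral_Icc (hs.1.trans hs.2)
  have hconst := constant_of_has_deriv_right_zero (f := fun s => D s * Real.exp (A s))
    (hD.mul (Real.continuous_exp.comp_continuousOn hA)) fun b hb => by
      have h := (hD' b hb).mul (ha.hasDerivWithinAt_integral_Ici hb).exp
      rwa [show -(a b * D b) * _ + D b * (_ * a b) = 0 by ring] at h
  rw [Real.exp_neg, eq_mul_inv_iff_mul_eq₀ (Real.exp_ne_zero _)]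
  simpa [A] using hconst s hs

structure IsLoewnerTrajOn (ξ : ℝ → ℝ) (x r : ℝ) (g : ℝ → ℝ) : Prop where
  cont : ContinuousOn g (Icc 0 r)
  gt : ∀ s ∈ Icc 0 r, ξ s < g s
  ode : ∀ s ∈ Icc 0 r, g s = x + ∫ u in (0:ℝ)..s, 2 / (g u - ξ u)

theorem IsLoewnerTraj.isLoewnerTrajOn {ξ g : ℝ → ℝ} {x r : ℝ} {ζ : EReal}
    (hg : IsLoewnerTraj ξ x ζ g) (hr : (r : EReal) < ζ) : IsLoewnerTrajOn ξ x r g := by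
  have hsub : Icc 0 r ⊆ {s : ℝ | 0 ≤ s ∧ (s : EReal) < ζ} := fun s hs =>
    ⟨hs.1, (EReal.coe_le_coe_iff.2 hs.2).trans_lt hr⟩
  exact ⟨hg.cont.mono hsub, fun s hs => hg.gt s (hsub hs).1 (hsub hs).2,
    fun s hs => hg.ode s (hsub hs).1 (hsub hs).2⟩

namespace IsLoewnerTrajOn

variable {ξ g g' : ℝ → ℝ} {x y r s : ℝ}

theorem apply_zero (hg : IsLoewnerTrajOn ξ x r g) (hr : 0 ≤ r) : g 0 = x := by
  simpa using hg.ode 0 (left_mem_Icc.2 hr)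

theorem continuousOn_two_div (hξ : ContinuousOn ξ (Icc 0 r)) (hg : IsLoewnerTrajOn ξ x r g)
    (hg' : IsLoewnerTrajOn ξ y r g') :
    ContinuousOn (fun u => 2 / ((g' u - ξ u) * (g u - ξ u))) (Icc 0 r) :=
  continuousOn_const.div ((hg'.cont.sub hξ).mul (hg.cont.sub hξ)) fun u hu =>
    mul_ne_zero (sub_ne_zero.2 (hg'.gt u hu).ne') (sub_ne_zero.2 (hg.gt u hu).ne')

theorem hasDerivWithinAt (hξ : ContinuousOn ξ (Icc 0 r)) (hg : IsLoewnerTrajOn ξ x r g)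
    {b : ℝ} (hb : b ∈ Ico 0 r) : HasDerivWithinAt g (2 / (g b - ξ b)) (Ici b) b := by
  have hf : ContinuousOn (fun u => 2 / (g u - ξ u)) (Icc 0 r) :=
    continuousOn_const.div (hg.cont.sub hξ) fun u hu => sub_ne_zero.2 (hg.gt u hu).ne'
  refine ((hf.hasDerivWithinAt_integral_Ici hb).const_add x).congr_of_eventuallyEq ?_
    (hg.ode b (Ico_subset_Icc_self hb))
  exact eventuallyEq_of_mem (Icc_mem_nhdsGE_of_mem hb) hg.ode

theorem exists_pos_le_sub (hξ : ContinuousOn ξ (Icc 0 r)) (hg : IsLoewnerTrajOn ξ x r g)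
    (hr : 0 ≤ r) : ∃ m > 0, ∀ s ∈ Icc 0 r, m ≤ g s - ξ s := by
  obtain ⟨s₀, hs₀, hmin⟩ := isCompact_Icc.exists_isMinOn (nonempty_Icc.2 hr) (hg.cont.sub hξ)
  exact ⟨g s₀ - ξ s₀, sub_pos.2 (hg.gt s₀ hs₀), fun s hs => hmin hs⟩

theorem sub_eq_mul_exp (hξ : ContinuousOn ξ (Icc 0 r)) (hg : IsLoewnerTrajOn ξ x r g)
    (hg' : IsLoewnerTrajOn ξ y r g') (hs : s ∈ Icc 0 r) :
    g' s - g s = (y - x) * Real.exp (-∫ u in (0:ℝ)..s, 2 / ((g' u - ξ u) * (g u - ξ u))) := by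
  have hr : 0 ≤ r := hs.1.trans hs.2
  rw [← hg.apply_zero hr, ← hg'.apply_zero hr]
  refine eq_mul_exp_neg_integral_of_hasDerivWithinAt (hg'.cont.sub hg.cont)
    (hg.continuousOn_two_div hξ hg') (fun b hb => ?_) hs
  have hb' := Ico_subset_Icc_self hb
  have h := (hg'.hasDerivWithinAt hξ hb).sub (hg.hasDerivWithinAt hξ hb)
  have := sub_ne_zero.2 (hg.gt b hb').ne'
  have := sub_ne_zero.2 (hg'.gt b hb').ne'
  rwa [show 2 / (g' b - ξ b) - 2 / (g b - ξ b) =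
    -(2 / ((g' b - ξ b) * (g b - ξ b)) * (g' b - g b)) by field_simp; ring] at h

theorem sub_mem_Ioc (hξ : ContinuousOn ξ (Icc 0 r)) (hg : IsLoewnerTrajOn ξ x r g)
    (hg' : IsLoewnerTrajOn ξ y r g') (hxy : x < y) (hs : s ∈ Icc 0 r) :
    g' s - g s ∈ Ioc 0 (y - x) := by
  have hint : 0 ≤ ∫ u in (0:ℝ)..s, 2 / ((g' u - ξ u) * (g u - ξ u)) := by
    refine intervalIntegral.integral_nonneg hs.1 fun u hu => ?_
    have hu' : u ∈ Icc 0 r := ⟨hu.1, hu.2.trans hs.2⟩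
    have := sub_pos.2 (hg.gt u hu')
    have := sub_pos.2 (hg'.gt u hu')
    positivity
  rw [hg.sub_eq_mul_exp hξ hg' hs]
  exact ⟨mul_pos (sub_pos.2 hxy) (Real.exp_pos _),
    mul_le_of_le_one_right (sub_pos.2 hxy).le (Real.exp_le_one_iff.2 (neg_nonpos.2 hint))⟩

end IsLoewnerTrajOn

theorem IsLoewnerTraj.swallowingTime_le {ξ g g' : ℝ → ℝ} {x y : ℝ} {ζ ζ' : EReal}
    (hξ : ContinuousOn ξ (Ici 0)) (hg : IsLoewnerTraj ξ x ζ g) (hg' : IsLoewnerTraj ξ y ζ' g')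
    (hxy : x < y) : ζ ≤ ζ' := by
  refine le_of_forall_lt fun c hc => ?_
  induction c using EReal.rec with
  | bot => exact EReal.bot_lt_zero.trans hg'.pos
  | top => exact absurd hc not_top_lt
  | coe t =>
    rcases lt_or_ge t 0 with ht | ht
    · exact (EReal.coe_lt_coe_iff.2 ht).trans hg'.pos
    by_contra! hζ'
    have hξt : ContinuousOn ξ (Icc 0 t) := hξ.mono Icc_subset_Ici_self
    have hgOn := hg.isLoewnerTrajOn hc
    obtain ⟨m, hm, hmle⟩ := hgOn.exists_pos_le_sub hξt ht
    obtain ⟨M, hM⟩ := (isCompact_Icc.image_of_continuousOn (hgOn.cont.sub hξt)).bddAbove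
    have hζ'_ne_top : ζ' ≠ ⊤ := ne_top_of_le_ne_top (EReal.coe_ne_top t) hζ'
    set r := ζ'.toReal
    have hr : (r : EReal) = ζ' := EReal.coe_toReal hζ'_ne_top hg'.pos.ne_bot
    have hr0 : 0 < r := EReal.coe_pos.1 (hr ▸ hg'.pos)
    have hrt : r ≤ t := EReal.coe_le_coe_iff.1 (hr ▸ hζ')
    have hbounds : ∀ u ∈ Ioo 0 r, g' u - ξ u ∈ Icc m (M + (y - x)) := by
      intro u hu
      have hut : u ∈ Icc 0 t := ⟨hu.1.le, hu.2.le.trans hrt⟩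
      have hu : (u : EReal) < ζ' := hr ▸ EReal.coe_lt_coe_iff.2 hu.2
      have hd := (hg.isLoewnerTrajOn ((EReal.coe_le_coe_iff.2 hut.2).trans_lt hc)).sub_mem_Ioc
        (hξ.mono Icc_subset_Ici_self) (hg'.isLoewnerTrajOn hu) hxy (right_mem_Icc.2 hut.1)
      have := hmle u hut
      have : g u - ξ u ≤ M := hM (mem_image_of_mem _ hut)
      constructor <;> linarith [hd.1, hd.2]
    have hev : ∀ᶠ u in 𝓝[<] r, g' u - ξ u ∈ Icc m (M + (y - x)) :=
      eventually_of_mem (Ioo_mem_nhdsLT hr0) hbounds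
    have hlim : m ≤ liminf (fun u => g' u - ξ u) (𝓝[<] r) :=
      le_liminf_of_le (isCoboundedUnder_ge_of_eventually_le _ (hev.mono fun _ hu => hu.2))
        (hev.mono fun _ hu => hu.1)
    rw [hg'.maximal hζ'_ne_top] at hlim
    linarith

theorem abs_two_div_mul_sub_two_div_mul_le {m p q d : ℝ} (hm : 0 < m) (hq : m ≤ q)
    (hpq : q ≤ p) (hd : p - q ≤ d) : |2 / (p * q) - 2 / (q * q)| ≤ 2 * d / m ^ 3 := by
  have hq0 : 0 < q := hm.trans_le hq
  have hp0 : 0 < p := hq0.trans_le hpq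
  rw [show 2 / (p * q) - 2 / (q * q) = -(2 * (p - q) / (p * q * q)) by field_simp; ring,
    abs_neg, abs_of_nonneg (by have := sub_nonneg.2 hpq; positivity)]
  gcongr
  · linarith
  · calc m ^ 3 = m * m * m := by ring
      _ ≤ p * q * q := by gcongr; linarith

theorem IsLoewnerTrajOn.tendsto_integral_two_div {ξ g : ℝ → ℝ} {g' : ℝ → ℝ → ℝ} {x t : ℝ}
    (hξ : ContinuousOn ξ (Icc 0 t)) (hg : IsLoewnerTrajOn ξ x t g)
    (hg' : ∀ y > x, IsLoewnerTrajOn ξ y t (g' y)) (ht : 0 ≤ t) :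
    Tendsto (fun y => ∫ u in (0:ℝ)..t, 2 / ((g' y u - ξ u) * (g u - ξ u))) (𝓝[>] x)
      (𝓝 (∫ u in (0:ℝ)..t, 2 / ((g u - ξ u) * (g u - ξ u)))) := by
  obtain ⟨m, hm, hmle⟩ := hg.exists_pos_le_sub hξ ht
  have hbound : ∀ y > x, ‖(∫ u in (0:ℝ)..t, 2 / ((g' y u - ξ u) * (g u - ξ u))) -
      ∫ u in (0:ℝ)..t, 2 / ((g u - ξ u) * (g u - ξ u))‖ ≤ 2 * (y - x) / m ^ 3 * t := by
    intro y hy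
    rw [← intervalIntegral.integral_sub
      ((hg.continuousOn_two_div hξ (hg' y hy)).intervalIntegrable_of_Icc ht)
      ((hg.continuousOn_two_div hξ hg).intervalIntegrable_of_Icc ht)]
    refine (intervalIntegral.norm_integral_le_of_norm_le_const fun u hu => ?_).trans_eq
      (by rw [sub_zero, abs_of_nonneg ht])
    rw [uIoc_of_le ht] at hu
    have hu' := Ioc_subset_Icc_self hu
    have hd := hg.sub_mem_Ioc hξ (hg' y hy) hy hu'
    exact abs_two_div_mul_sub_two_div_mul_le hm (hmle u hu') (by linarith [hd.1])
      (by linarith [hd.2])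
  have h0 : Tendsto (fun y => 2 * (y - x) / m ^ 3 * t) (𝓝[>] x) (𝓝 0) :=
    tendsto_nhdsWithin_of_tendsto_nhds (Continuous.tendsto' (by fun_prop) x 0 (by simp))
  exact tendsto_iff_norm_sub_tendsto_zero.2 <|
    squeeze_zero' (Eventually.of_forall fun _ => norm_nonneg _)
      (eventually_nhdsWithin_of_forall hbound) h0

theorem stmt4_general
    (ξ : ℝ → ℝ) (hc : ContinuousOn ξ (Set.Ici 0))
    (x : ℝ)
    (ζ : EReal) (g : ℝ → ℝ) (hL : IsLoewnerTraj ξ x ζ g)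
    (ζ' : ℝ → EReal) (g' : ℝ → ℝ → ℝ)
    (hL' : ∀ y : ℝ, x < y → IsLoewnerTraj ξ y (ζ' y) (g' y)) :
    ∀ t : ℝ, 0 ≤ t → (t : EReal) < ζ →
      Filter.Tendsto (fun y => (g' y t - g t) / (y - x))
        (nhdsWithin x (Set.Ioi x))
        (nhds (Real.exp (-2 * ∫ s in (0:ℝ)..t, ((g s - ξ s) ^ 2)⁻¹))) := by
  intro t ht htζ
  have hξ : ContinuousOn ξ (Icc 0 t) := hc.mono Icc_subset_Ici_self
  have hg := hL.isLoewnerTrajOn htζ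
  have hg' : ∀ y > x, IsLoewnerTrajOn ξ y t (g' y) := fun y hy =>
    (hL' y hy).isLoewnerTrajOn (htζ.trans_le (hL.swallowingTime_le hc (hL' y hy) hy))
  have hexponent : -2 * ∫ s in (0:ℝ)..t, ((g s - ξ s) ^ 2)⁻¹ =
      -∫ s in (0:ℝ)..t, 2 / ((g s - ξ s) * (g s - ξ s)) := by
    rw [← intervalIntegral.integral_const_mul, ← intervalIntegral.integral_neg]
    simp only [div_eq_mul_inv, sq, neg_mul]
  rw [hexponent]
  refine ((hg.tendsto_integral_two_div hξ hg' ht).neg.rexp).congr' ?_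
  filter_upwards [self_mem_nhdsWithin] with y hy
  rw [hg.sub_eq_mul_exp hξ (hg' y hy) (right_mem_Icc.2 ht),
    mul_div_cancel_left₀ _ (sub_ne_zero.2 hy.ne')]

/-- Right-differentiability of the Loewner flow: for `x > ξ_0` and `t < ζ_x`,
`(g_t(y) − g_t(x))/(y − x) → exp(−2 ∫₀ᵗ (g_s(x) − ξ_s)⁻² ds)` as `y ↓ x`. -/
theorem stmt4
    (ξ : ℝ → ℝ) (hc : ContinuousOn ξ (Set.Ici 0))
    (x : ℝ) (hx : ξ 0 < x)
    (ζ : EReal) (g : ℝ → ℝ) (hL : IsLoewnerTraj ξ x ζ g)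
    (ζ' : ℝ → EReal) (g' : ℝ → ℝ → ℝ)
    (hL' : ∀ y : ℝ, x < y → IsLoewnerTraj ξ y (ζ' y) (g' y)) :
    ∀ t : ℝ, 0 ≤ t → (t : EReal) < ζ →
      Filter.Tendsto (fun y => (g' y t - g t) / (y - x))
        (nhdsWithin x (Set.Ioi x))
        (nhds (Real.exp (-2 * ∫ s in (0:ℝ)..t, ((g s - ξ s) ^ 2)⁻¹))) :=
  stmt4_general ξ hc x ζ g hL ζ' g' hL'
end

section
/- Let κ > 0 and ρ₋, ρ₊ > −2. Then for every twice continuously differentiable function f : ℝ → ℝ, ∫_{−1}^{1} [ ( −((ρ₊+2)/2)(y+1) − ((ρ₋+2)/2)(y−1) ) f'(y) + (κ/4)(1−y²) f''(y) ] · (1+y)^{2(ρ₋+2)/κ − 1} (1−y)^{2(ρ₊+2)/κ − 1} dy = 0. -/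
open MeasureTheory Set

/-! With `a = 2(ρ₋+2)/κ` and `b = 2(ρ₊+2)/κ`, the weighted integrand is `κ/4` times the derivative
of `(1+y)^a (1-y)^b f'(y)`, which vanishes at `±1` because `a, b > 0`. The fundamental theorem of
calculus applies on `[-1, 1]` since the integrand is integrable there, its exponents `a - 1` and
`b - 1` exceeding `-1`. -/

theorem hasDerivAt_one_add_rpow_mul_one_sub_rpow (a b : ℝ) {x : ℝ} (hx : x ∈ Ioo (-1 : ℝ) 1) :
    HasDerivAt (fun y : ℝ => (1 + y) ^ a * (1 - y) ^ b)
      ((a * (1 - x) - b * (1 + x)) * (1 + x) ^ (a - 1) * (1 - x) ^ (b - 1)) x := by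
  have hp : 0 < 1 + x := by linarith [hx.1]
  have hm : 0 < 1 - x := by linarith [hx.2]
  have hdp := ((hasDerivAt_id x).const_add 1).rpow_const (p := a) (Or.inl hp.ne')
  have hdm := ((hasDerivAt_id x).const_sub 1).rpow_const (p := b) (Or.inl hm.ne')
  refine (hdp.mul hdm).congr_deriv ?_
  simp only [id, Real.rpow_sub_one hp.ne', Real.rpow_sub_one hm.ne']
  field_simp
  ring

theorem intervalIntegrable_mul_one_add_rpow_mul_one_sub_rpow {h : ℝ → ℝ} (hh : Continuous h)
    {p q : ℝ} (hp : -1 < p) (hq : -1 < q) :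
    IntervalIntegrable (fun y => h y * (1 + y) ^ p * (1 - y) ^ q) volume (-1) 1 := by
  have hleft : IntervalIntegrable (fun y : ℝ => (1 + y) ^ p) volume (-1) 0 := by
    simpa [add_comm] using
      (intervalIntegral.intervalIntegrable_rpow' hp (a := 0) (b := 1)).comp_add_right 1
  have hright : IntervalIntegrable (fun y : ℝ => (1 - y) ^ q) volume 0 1 := by
    simpa using
      ((intervalIntegral.intervalIntegrable_rpow' hq (a := 0) (b := 1)).comp_sub_left 1).symm
  refine IntervalIntegrable.trans (b := 0) ?_ ?_
  · refine (hleft.continuousOn_mul (g := fun y => h y * (1 - y) ^ q) ?_).congr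
      fun y _ => by ring
    refine hh.continuousOn.mul (ContinuousOn.rpow_const (by fun_prop) fun y hy => Or.inl ?_)
    rw [uIcc_of_le (by norm_num)] at hy
    exact (show (0:ℝ) < 1 - y by linarith [hy.2]).ne'
  · refine (hright.continuousOn_mul (g := fun y => h y * (1 + y) ^ p) ?_).congr
      fun y _ => by ring
    refine hh.continuousOn.mul (ContinuousOn.rpow_const (by fun_prop) fun y hy => Or.inl ?_)
    rw [uIcc_of_le (by norm_num)] at hy
    exact (show (0:ℝ) < 1 + y by linarith [hy.1]).ne'

theorem integral_deriv_one_add_rpow_mul_one_sub_rpow_mul_eq_zero {a b : ℝ} (ha : 0 < a)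
    (hb : 0 < b) {g : ℝ → ℝ} (hg : ContDiff ℝ 1 g) :
    ∫ y in (-1 : ℝ)..1,
      ((a * (1 - y) - b * (1 + y)) * g y + (1 - y ^ 2) * deriv g y)
        * (1 + y) ^ (a - 1) * (1 - y) ^ (b - 1) = 0 := by
  have hw : Continuous fun y : ℝ => (1 + y) ^ a * (1 - y) ^ b := by
    have := Real.continuous_rpow_const ha.le
    have := Real.continuous_rpow_const hb.le
    fun_prop
  rw [intervalIntegral.integral_eq_sub_of_hasDerivAt_of_le
    (f := fun y => (1 + y) ^ a * (1 - y) ^ b * g y) (by norm_num)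
    (hw.mul hg.continuous).continuousOn]
  · simp [Real.zero_rpow ha.ne', Real.zero_rpow hb.ne']
  · intro x hx
    refine ((hasDerivAt_one_add_rpow_mul_one_sub_rpow a b hx).mul
      ((hg.differentiable one_ne_zero).differentiableAt.hasDerivAt)).congr_deriv ?_
    have hp : 0 < 1 + x := by linarith [hx.1]
    have hm : 0 < 1 - x := by linarith [hx.2]
    rw [Real.rpow_sub_one hp.ne', Real.rpow_sub_one hm.ne']
    field_simp
    ring
  · exact intervalIntegrable_mul_one_add_rpow_mul_one_sub_rpow
      (by have := hg.continuous_deriv le_rfl; fun_prop) (by linarith) (by linarith)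

/-- The Beta-type law with density proportional to `(1+y)^{2(ρ₋+2)/κ − 1}(1−y)^{2(ρ₊+2)/κ − 1}`
on `(−1,1)` is invariant (in weak form) for the diffusion with generator
`ℒf(y) = (−((ρ₊+2)/2)(y+1) − ((ρ₋+2)/2)(y−1)) f'(y) + (κ/4)(1−y²) f''(y)`. -/
theorem stmt9 (κ ρm ρp : ℝ) (hκ : 0 < κ) (hρm : -2 < ρm) (hρp : -2 < ρp)
    (f : ℝ → ℝ) (hf : ContDiff ℝ 2 f) :
    ∫ y in (-1:ℝ)..1,
      ((-((ρp + 2) / 2) * (y + 1) - (ρm + 2) / 2 * (y - 1)) * deriv f y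
          + κ / 4 * (1 - y ^ 2) * deriv (deriv f) y)
        * (1 + y) ^ (2 * (ρm + 2) / κ - 1) * (1 - y) ^ (2 * (ρp + 2) / κ - 1) = 0 := by
  have hκ' := hκ.ne'
  have key := integral_deriv_one_add_rpow_mul_one_sub_rpow_mul_eq_zero
    (div_pos (by linarith : 0 < 2 * (ρm + 2)) hκ) (div_pos (by linarith : 0 < 2 * (ρp + 2)) hκ)
    hf.deriv'
  rw [← mul_eq_zero_of_right (κ / 4) key, ← intervalIntegral.integral_const_mul]
  congr 1
  ext y
  field_simp
  ring
end

section
/- For every δ ∈ (0,1) the complex-valued function x ↦ x^{δ−2}(1 − e^{−ix}) is Lebesgue integrable on (0,∞), and (1 − δ) · ∫₀^∞ x^{δ−2}(1 − e^{−ix}) dx → 1 as δ ↑ 1. -/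
/-!
Split the integral at `1`. On `(0, 1]` the bound `‖1 - e^{-ix}‖ ≤ x` makes the integral at most
`∫₀¹ x^{δ-1} dx = 1/δ`. On `(1, ∞)` the constant part integrates exactly to `1/(1 - δ)`, while the
oscillatory part `∫₁^∞ x^{δ-2} e^{-ix} dx` stays bounded by `2` uniformly in `δ` after one
integration by parts. Hence `‖(1 - δ) I(δ) - 1‖ ≤ (1 - δ)(1/δ + 2) → 0`.
-/

open MeasureTheory Filter Set
open Complex Topology

/-- The integrand of the Lévy–Khintchine exponent at frequency `1` of the Lévy measure
`x ^ p dx` on `(0, ∞)`; the theorem concerns `p = δ - 2`. -/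
noncomputable def levyIntegrand (p x : ℝ) : ℂ := ((x ^ p : ℝ) : ℂ) * (1 - exp (-I * x))

lemma norm_exp_neg_I_mul (x : ℝ) : ‖exp (-I * x)‖ = 1 := by
  simp [norm_exp]

lemma norm_one_sub_exp_neg_I_mul_le_abs (x : ℝ) : ‖1 - exp (-I * x)‖ ≤ |x| := by
  simpa [norm_sub_rev] using Real.norm_exp_I_mul_ofReal_sub_one_le (x := -x)

lemma norm_one_sub_exp_neg_I_mul_le_two (x : ℝ) : ‖1 - exp (-I * x)‖ ≤ 2 :=
  (norm_sub_le _ _).trans (by rw [norm_one, norm_exp_neg_I_mul]; norm_num)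

lemma hasDerivAt_I_mul_exp_neg_I_mul (x : ℝ) :
    HasDerivAt (fun y : ℝ => I * exp (-I * y)) (exp (-I * x)) x := by
  have h := (((hasDerivAt_id' (x : ℂ)).const_mul (-I)).cexp.const_mul I).comp_ofReal
  convert h using 1
  ring_nf
  rw [I_sq]
  ring

lemma integrableOn_rpow_Ioc_zero_one {r : ℝ} (hr : -1 < r) :
    IntegrableOn (fun x : ℝ => x ^ r) (Ioc 0 1) :=
  (intervalIntegrable_iff_integrableOn_Ioc_of_le zero_le_one).1
    (intervalIntegral.intervalIntegrable_rpow' hr)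

section

variable {p x : ℝ}

lemma continuousOn_levyIntegrand : ContinuousOn (levyIntegrand p) (Ioi 0) :=
  (continuous_ofReal.comp_continuousOn
    (continuousOn_id.rpow_const fun x hx => Or.inl (ne_of_gt hx))).mul (by fun_prop)

lemma norm_levyIntegrand (hx : 0 < x) :
    ‖levyIntegrand p x‖ = x ^ p * ‖1 - exp (-I * x)‖ := by
  rw [levyIntegrand, norm_mul, norm_real, Real.norm_of_nonneg (Real.rpow_nonneg hx.le _)]

lemma norm_levyIntegrand_le_rpow_add_one (hx : 0 < x) : ‖levyIntegrand p x‖ ≤ x ^ (p + 1) := by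
  rw [norm_levyIntegrand hx, Real.rpow_add_one hx.ne']
  gcongr
  simpa [abs_of_pos hx] using norm_one_sub_exp_neg_I_mul_le_abs x

lemma norm_levyIntegrand_le_two_mul_rpow (hx : 0 < x) : ‖levyIntegrand p x‖ ≤ 2 * x ^ p := by
  rw [norm_levyIntegrand hx, mul_comm]
  gcongr
  exact norm_one_sub_exp_neg_I_mul_le_two x

lemma integrableOn_levyIntegrand_Ioc (hp : -2 < p) :
    IntegrableOn (levyIntegrand p) (Ioc 0 1) := by
  refine (integrableOn_rpow_Ioc_zero_one (r := p + 1) (by linarith)).mono'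
    ((continuousOn_levyIntegrand.mono Ioc_subset_Ioi_self).aestronglyMeasurable
      measurableSet_Ioc) ?_
  filter_upwards [ae_restrict_mem measurableSet_Ioc] with x hx
  exact norm_levyIntegrand_le_rpow_add_one hx.1

lemma norm_integral_levyIntegrand_Ioc_le (hp : -2 < p) :
    ‖∫ x in Ioc 0 1, levyIntegrand p x‖ ≤ (p + 2)⁻¹ := by
  calc ‖∫ x in Ioc 0 1, levyIntegrand p x‖
      ≤ ∫ x in Ioc 0 1, x ^ (p + 1) :=
        norm_integral_le_of_norm_le (integrableOn_rpow_Ioc_zero_one (r := p + 1) (by linarith)) <|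
          (ae_restrict_mem measurableSet_Ioc).mono fun x hx =>
            norm_levyIntegrand_le_rpow_add_one hx.1
    _ = (p + 2)⁻¹ := by
        rw [← intervalIntegral.integral_of_le zero_le_one, integral_rpow (Or.inl (by linarith))]
        norm_num [Real.zero_rpow (show p + 1 + 1 ≠ 0 by linarith)]
        ring_nf

lemma integrableOn_levyIntegrand_Ioi_one (hp : p < -1) :
    IntegrableOn (levyIntegrand p) (Ioi 1) := by
  refine ((integrableOn_Ioi_rpow_of_lt hp one_pos).const_mul 2).mono'
    ((continuousOn_levyIntegrand.mono (Ioi_subset_Ioi zero_le_one)).aestronglyMeasurable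
      measurableSet_Ioi) ?_
  filter_upwards [ae_restrict_mem measurableSet_Ioi] with x hx
  exact norm_levyIntegrand_le_two_mul_rpow (zero_lt_one.trans hx)

lemma integrableOn_levyIntegrand (hp₁ : -2 < p) (hp₂ : p < -1) :
    IntegrableOn (levyIntegrand p) (Ioi 0) := by
  rw [← Ioc_union_Ioi_eq_Ioi zero_le_one]
  exact (integrableOn_levyIntegrand_Ioc hp₁).union (integrableOn_levyIntegrand_Ioi_one hp₂)

lemma integrableOn_Ioi_one_rpow_mul_exp_neg_I_mul (hp : p < -1) :
    IntegrableOn (fun x : ℝ => ((x ^ p : ℝ) : ℂ) * exp (-I * x)) (Ioi 1) :=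
  (integrableOn_Ioi_rpow_of_lt hp one_pos).ofReal.mul_bdd (by fun_prop)
    (ae_of_all _ fun x => (norm_exp_neg_I_mul x).le)

/- Integrate by parts against the primitive `I * exp (-I * x)` of `exp (-I * x)`: the boundary
term at `1` has norm `1`, and the remaining integral is at most `∫₁^∞ |p| x^{p-1} dx = 1`. -/
lemma norm_integral_Ioi_one_rpow_mul_exp_neg_I_mul_le (hp : p < -1) :
    ‖∫ x in Ioi (1 : ℝ), ((x ^ p : ℝ) : ℂ) * exp (-I * x)‖ ≤ 2 := by
  set u : ℝ → ℂ := fun x => ((x ^ p : ℝ) : ℂ)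
  set v : ℝ → ℂ := fun x => I * exp (-I * x)
  set u' : ℝ → ℂ := fun x => ((p * x ^ (p - 1) : ℝ) : ℂ)
  have hu (x : ℝ) (hx : 0 < x) : HasDerivAt u (u' x) x :=
    (Real.hasDerivAt_rpow_const (Or.inl hx.ne')).ofReal_comp
  have hv_norm (x : ℝ) : ‖v x‖ = 1 := by
    rw [norm_mul, norm_I, norm_exp_neg_I_mul, one_mul]
  have hu'v : IntegrableOn (fun x => u' x * v x) (Ioi 1) :=
    ((integrableOn_Ioi_rpow_of_lt (by linarith : p - 1 < -1) one_pos).const_mul p).ofReal.mul_bdd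
      (by fun_prop) (ae_of_all _ fun x => (hv_norm x).le)
  have h_zero : Tendsto (u * v) (𝓝[>] 1) (𝓝 (u 1 * v 1)) :=
    ((hu 1 one_pos).continuousAt.mul
      (hasDerivAt_I_mul_exp_neg_I_mul 1).continuousAt).tendsto.mono_left nhdsWithin_le_nhds
  have h_infty : Tendsto (u * v) atTop (𝓝 0) := by
    refine squeeze_zero_norm' ?_ (by simpa using tendsto_rpow_neg_atTop (by linarith : 0 < -p))
    filter_upwards [eventually_gt_atTop 0] with x hx
    rw [Pi.mul_apply, norm_mul, hv_norm, mul_one, norm_real,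
      Real.norm_of_nonneg (Real.rpow_nonneg hx.le _)]
  have h_boundary : ‖u 1 * v 1‖ = 1 := by
    rw [norm_mul, hv_norm, norm_real, Real.one_rpow, norm_one, one_mul]
  have h_remainder : ‖∫ x in Ioi 1, u' x * v x‖ ≤ 1 := by
    calc ‖∫ x in Ioi 1, u' x * v x‖
        ≤ ∫ x in Ioi 1, -p * x ^ (p - 1) := by
          refine norm_integral_le_of_norm_le
            ((integrableOn_Ioi_rpow_of_lt (by linarith : p - 1 < -1) one_pos).const_mul (-p)) ?_
          filter_upwards [ae_restrict_mem measurableSet_Ioi] with x hx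
          rw [norm_mul, hv_norm, mul_one, norm_real, Real.norm_eq_abs, abs_mul,
            abs_of_neg (by linarith : p < 0),
            abs_of_pos (Real.rpow_pos_of_pos (zero_lt_one.trans hx) _)]
      _ = 1 := by
          rw [integral_const_mul, integral_Ioi_rpow_of_lt (by linarith) one_pos, sub_add_cancel,
            Real.one_rpow]
          field_simp [show p ≠ 0 by linarith]
  rw [integral_Ioi_mul_deriv_eq_deriv_mul (fun x hx => hu x (zero_lt_one.trans hx))
    (fun x _ => hasDerivAt_I_mul_exp_neg_I_mul x) (integrableOn_Ioi_one_rpow_mul_exp_neg_I_mul hp)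
    hu'v h_zero h_infty, zero_sub]
  exact (norm_sub_le _ _).trans (by rw [norm_neg]; linarith)

lemma integral_levyIntegrand_Ioi_one (hp : p < -1) :
    ∫ x in Ioi 1, levyIntegrand p x
      = ((-(p + 1))⁻¹ : ℝ) - ∫ x in Ioi (1 : ℝ), ((x ^ p : ℝ) : ℂ) * exp (-I * x) := by
  have h_rpow : ∫ x in Ioi (1 : ℝ), x ^ p = (-(p + 1))⁻¹ := by
    rw [integral_Ioi_rpow_of_lt hp one_pos, Real.one_rpow, neg_div, ← div_neg, one_div]
  have h_sub : ∫ x in Ioi (1 : ℝ), (((x ^ p : ℝ) : ℂ) - ((x ^ p : ℝ) : ℂ) * exp (-I * x))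
      = (∫ x in Ioi (1 : ℝ), ((x ^ p : ℝ) : ℂ))
        - ∫ x in Ioi (1 : ℝ), ((x ^ p : ℝ) : ℂ) * exp (-I * x) :=
    integral_sub (integrableOn_Ioi_rpow_of_lt hp one_pos).ofReal
      (integrableOn_Ioi_one_rpow_mul_exp_neg_I_mul hp)
  rw [integral_complex_ofReal, h_rpow] at h_sub
  rw [← h_sub]
  simp only [levyIntegrand, mul_sub, mul_one]

lemma norm_integral_levyIntegrand_sub_le (hp₁ : -2 < p) (hp₂ : p < -1) :
    ‖(∫ x in Ioi 0, levyIntegrand p x) - ((-(p + 1))⁻¹ : ℝ)‖ ≤ (p + 2)⁻¹ + 2 := by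
  rw [← Ioc_union_Ioi_eq_Ioi zero_le_one, setIntegral_union (Ioc_disjoint_Ioi le_rfl)
    measurableSet_Ioi (integrableOn_levyIntegrand_Ioc hp₁) (integrableOn_levyIntegrand_Ioi_one hp₂),
    integral_levyIntegrand_Ioi_one hp₂, add_sub_assoc, sub_sub_cancel_left, ← sub_eq_add_neg]
  exact (norm_sub_le _ _).trans (add_le_add (norm_integral_levyIntegrand_Ioc_le hp₁)
    (norm_integral_Ioi_one_rpow_mul_exp_neg_I_mul_le hp₂))

end

/-- For `δ ∈ (0,1)` the function `x ↦ x^{δ−2}(1 − e^{−ix})` is Lebesgue integrable on `(0,∞)`,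
and `(1 − δ) ∫₀^∞ x^{δ−2}(1 − e^{−ix}) dx → 1` as `δ ↑ 1`. -/
theorem stmt10 :
    (∀ δ ∈ Set.Ioo (0:ℝ) 1,
      MeasureTheory.IntegrableOn
        (fun x : ℝ => ((x ^ (δ - 2) : ℝ) : ℂ) * (1 - Complex.exp (-Complex.I * x)))
        (Set.Ioi 0)) ∧
    Filter.Tendsto
      (fun δ : ℝ => ((1 - δ : ℝ) : ℂ) *
        ∫ x in Set.Ioi (0:ℝ), ((x ^ (δ - 2) : ℝ) : ℂ) * (1 - Complex.exp (-Complex.I * x)))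
      (nhdsWithin 1 (Set.Iio 1)) (nhds 1) := by
  refine ⟨fun δ hδ => integrableOn_levyIntegrand (by linarith [hδ.1]) (by linarith [hδ.2]), ?_⟩
  have h_bound : Tendsto (fun δ : ℝ => (1 - δ) * (δ⁻¹ + 2)) (𝓝[<] 1) (𝓝 0) := by
    have h : ContinuousAt (fun δ : ℝ => (1 - δ) * (δ⁻¹ + 2)) 1 := by fun_prop (disch := norm_num)
    simpa using h.tendsto.mono_left nhdsWithin_le_nhds
  change Tendsto (fun δ : ℝ => ((1 - δ : ℝ) : ℂ) * ∫ x in Ioi 0, levyIntegrand (δ - 2) x) _ _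
  rw [tendsto_iff_norm_sub_tendsto_zero]
  refine squeeze_zero' (Eventually.of_forall fun _ => norm_nonneg _) ?_ h_bound
  filter_upwards [Ioo_mem_nhdsLT zero_lt_one] with δ ⟨hδ₀, hδ₁⟩
  have key := norm_integral_levyIntegrand_sub_le (p := δ - 2) (by linarith) (by linarith)
  rw [show -(δ - 2 + 1) = 1 - δ by ring, show δ - 2 + 2 = δ by ring] at key
  set J := ∫ x in Ioi 0, levyIntegrand (δ - 2) x
  have h_factor : ((1 - δ : ℝ) : ℂ) * J - 1 = ((1 - δ : ℝ) : ℂ) * (J - ((1 - δ)⁻¹ : ℝ)) := by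
    rw [mul_sub, ← ofReal_mul, mul_inv_cancel₀ (by linarith), ofReal_one]
  rw [h_factor, norm_mul, norm_real, Real.norm_of_nonneg (by linarith)]
  gcongr
end

section
/- Let κ ∈ (8/3, 4) and set κ' = 16/κ, and let β ∈ (−1, 1). Then there exists a unique ρ' ∈ (κ' − 6, 0) such that sin(πρ'/2) · ( 1 + cos(πκ'/2) − 2/(1−β) ) = cos(πρ'/2) · sin(πκ'/2). -/
/-!
Put `s = sin(πκ'/2)` and `A = 1 + cos(πκ'/2) − 2/(1−β)`, so the equation reads
`g(ρ') = 0` for `g(ρ) = A sin(πρ/2) − s cos(πρ/2)`. Since `πκ'/2 ∈ (2π, 3π)` we have `s > 0`;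
hence `g(0) = −s < 0`, while `g(κ'−6) = s (2/(1−β) − 1) > 0` because `π(κ'−6)/2 = πκ'/2 − 3π`.
The intermediate value theorem gives a root. Two roots `x, y` satisfy `s sin(π(y−x)/2) = 0`,
and `|y − x| < 6 − κ' < 2` forces `x = y`.
-/

open Real Set

theorem sin_pi_mul_div_two_pos {x : ℝ} (hx : x ∈ Ioo 4 6) : 0 < sin (π * x / 2) := by
  rw [← sin_sub_two_pi]
  apply sin_pos_of_pos_of_lt_pi <;> nlinarith [hx.1, hx.2, pi_pos]

theorem sin_pi_mul_sub_six_div_two (x : ℝ) : sin (π * (x - 6) / 2) = -sin (π * x / 2) := by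
  rw [show π * (x - 6) / 2 = π * x / 2 - (3 : ℕ) * π by push_cast; ring, sin_sub_nat_mul_pi]
  ring

theorem cos_pi_mul_sub_six_div_two (x : ℝ) : cos (π * (x - 6) / 2) = -cos (π * x / 2) := by
  rw [show π * (x - 6) / 2 = π * x / 2 - (3 : ℕ) * π by push_cast; ring, cos_sub_nat_mul_pi]
  ring

theorem exists_mem_Ioo_sin_mul_eq_cos_mul {φ : ℝ → ℝ} {a b A s : ℝ} (hφ : Continuous φ)
    (hab : a ≤ b) (ha : 0 < sin (φ a) * A - cos (φ a) * s)
    (hb : sin (φ b) * A - cos (φ b) * s < 0) :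
    ∃ x ∈ Ioo a b, sin (φ x) * A = cos (φ x) * s := by
  have hcont : Continuous fun x => sin (φ x) * A - cos (φ x) * s := by fun_prop
  obtain ⟨x, hx, hx0⟩ := intermediate_value_Ioo' hab hcont.continuousOn ⟨hb, ha⟩
  exact ⟨x, hx, sub_eq_zero.mp hx0⟩

theorem eq_of_sin_mul_eq_cos_mul {x y A s : ℝ} (hs : s ≠ 0)
    (hx : sin x * A = cos x * s) (hy : sin y * A = cos y * s) (hxy : |y - x| < π) : x = y := by
  have hsin : sin (y - x) * s = 0 := by
    rw [sin_sub]
    linear_combination sin x * hy - sin y * hx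
  obtain ⟨h₁, h₂⟩ := abs_lt.mp hxy
  have hdiff := (sin_eq_zero_iff_of_lt_of_lt h₁ h₂).mp ((mul_eq_zero.mp hsin).resolve_right hs)
  linarith

/-- Existence and uniqueness of the Miller–Sheffield–Werner trunk exponent: for
`κ ∈ (8/3, 4)`, `κ' = 16/κ` and `β ∈ (−1,1)` there is a unique `ρ' ∈ (κ'−6, 0)` with
`sin(πρ'/2)(1 + cos(πκ'/2) − 2/(1−β)) = cos(πρ'/2) sin(πκ'/2)`. -/
theorem stmt13 (κ β : ℝ) (hκ : κ ∈ Set.Ioo (8/3 : ℝ) 4) (hβ : β ∈ Set.Ioo (-1 : ℝ) 1) :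
    ∃! ρ' : ℝ, ρ' ∈ Set.Ioo (16 / κ - 6) 0 ∧
      Real.sin (π * ρ' / 2) * (1 + Real.cos (π * (16 / κ) / 2) - 2 / (1 - β))
        = Real.cos (π * ρ' / 2) * Real.sin (π * (16 / κ) / 2) := by
  obtain ⟨hκ₁, hκ₂⟩ := hκ
  have hκ' : 16 / κ ∈ Ioo 4 6 :=
    ⟨by rw [lt_div_iff₀ (by linarith)]; linarith, by rw [div_lt_iff₀ (by linarith)]; linarith⟩
  have hs := sin_pi_mul_div_two_pos hκ'
  have hβ' : 1 < 2 / (1 - β) := by rw [lt_div_iff₀ (by linarith [hβ.2])]; linarith [hβ.1]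
  have hleft : 0 < sin (π * (16 / κ - 6) / 2) * (1 + cos (π * (16 / κ) / 2) - 2 / (1 - β))
      - cos (π * (16 / κ - 6) / 2) * sin (π * (16 / κ) / 2) := by
    rw [sin_pi_mul_sub_six_div_two, cos_pi_mul_sub_six_div_two]
    nlinarith
  have hright : sin (π * 0 / 2) * (1 + cos (π * (16 / κ) / 2) - 2 / (1 - β))
      - cos (π * 0 / 2) * sin (π * (16 / κ) / 2) < 0 := by simpa using hs
  obtain ⟨ρ, hρ, hρeq⟩ := exists_mem_Ioo_sin_mul_eq_cos_mul (φ := fun ρ => π * ρ / 2)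
    (by fun_prop) (by linarith [hκ'.2]) hleft hright
  refine ⟨ρ, ⟨hρ, hρeq⟩, fun y ⟨hy, hyeq⟩ => ?_⟩
  have hclose : |π * y / 2 - π * ρ / 2| < π := by
    rw [abs_lt]
    constructor <;> nlinarith [pi_pos, hρ.1, hρ.2, hy.1, hy.2, hκ'.1]
  have hθ := eq_of_sin_mul_eq_cos_mul hs.ne' hρeq hyeq hclose
  exact mul_left_cancel₀ pi_ne_zero (by linarith : π * y = π * ρ)
end

section
/- Fix μ ∈ ℝ. For each κ ∈ (8/3, 4) with |μ|·(4/κ − 1) < 1, let β(κ) = μ(4/κ − 1) and let ρ'(κ) be the unique ρ' ∈ (16/κ − 6, 0) satisfying sin(πρ'/2) · ( 1 + cos(8π/κ) − 2/(1−β(κ)) ) = cos(πρ'/2) · sin(8π/κ). Then ρ'(κ) → (2/π)·arctan(μ/π) − 1 as κ ↑ 4, where arctan takes values in (−π/2, π/2). -/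
/-!
Put `x = πρ'/2 ∈ (-π, 0)`, `c(κ) = 1 + cos(8π/κ) - 2/(1 - β(κ))` and `s(κ) = sin(8π/κ)`. The
trunk equation says `tan(x + π/2) = -c/s`, and `x + π/2 ∈ (-π/2, π/2)`, so
`ρ'(κ) = (2/π) arctan(-c(κ)/s(κ)) - 1`. Both `c` and `s` vanish at `κ = 4`, with derivatives
`μ/2` and `-π/2`, so the ratio of difference quotients gives `-c/s → μ/π`.
-/

open Real Filter Topology

theorem tendsto_div_nhdsNE_of_hasDerivAt {f g : ℝ → ℝ} {f' g' a : ℝ}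
    (hf : HasDerivAt f f' a) (hg : HasDerivAt g g' a) (hfa : f a = 0) (hga : g a = 0)
    (hg' : g' ≠ 0) : Tendsto (fun x => f x / g x) (𝓝[≠] a) (𝓝 (f' / g')) := by
  refine ((hasDerivAt_iff_tendsto_slope.mp hf).div (hasDerivAt_iff_tendsto_slope.mp hg)
    hg').congr' ?_
  filter_upwards [self_mem_nhdsWithin] with x hx
  have hxa : x - a ≠ 0 := sub_ne_zero.mpr hx
  simp only [Pi.div_apply, slope_def_field, hfa, hga, sub_zero]
  field_simp

theorem arctan_neg_div_eq_add_pi_div_two {x c s : ℝ} (hx : x ∈ Set.Ioo (-π) 0)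
    (hs : s ≠ 0) (h : sin x * c = cos x * s) : arctan (-c / s) = x + π / 2 := by
  have hsin : sin x ≠ 0 := (sin_neg_of_neg_of_neg_pi_lt hx.2 hx.1).ne
  refine arctan_eq_of_tan_eq ?_ ⟨by linarith [hx.1], by linarith [hx.2]⟩
  rw [tan_eq_sin_div_cos, sin_add_pi_div_two, cos_add_pi_div_two, div_eq_div_iff
    (neg_ne_zero.mpr hsin) hs]
  linear_combination -h

theorem hasDerivAt_const_div (c : ℝ) {a : ℝ} (ha : a ≠ 0) :
    HasDerivAt (fun x : ℝ => c / x) (-(c / a ^ 2)) a :=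
  ((hasDerivAt_const a c).div (hasDerivAt_id' a) ha).congr_deriv (by ring)

theorem eight_pi_div_four : 8 * π / 4 = 2 * π := by ring

theorem hasDerivAt_trunk_factor (μ : ℝ) :
    HasDerivAt (fun κ : ℝ => 1 + cos (8 * π / κ) - 2 / (1 - μ * (4 / κ - 1))) (μ / 2) 4 := by
  have hβ : HasDerivAt (fun κ : ℝ => 1 - μ * (4 / κ - 1)) (μ / 4) 4 :=
    (((hasDerivAt_const_div 4 four_ne_zero).sub_const 1).const_mul μ).const_sub 1 |>.congr_deriv
      (by ring)
  refine ((hasDerivAt_const_div (8 * π) four_ne_zero).cos.const_add 1).sub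
    ((hasDerivAt_const (4 : ℝ) (2 : ℝ)).div hβ (by norm_num)) |>.congr_deriv ?_
  norm_num [eight_pi_div_four]
  ring

theorem hasDerivAt_sin_eight_pi_div :
    HasDerivAt (fun κ : ℝ => sin (8 * π / κ)) (-(π / 2)) 4 :=
  (hasDerivAt_const_div (8 * π) four_ne_zero).sin.congr_deriv (by
    rw [eight_pi_div_four, cos_two_pi]; ring)

theorem tendsto_trunk_tan (μ : ℝ) :
    Tendsto (fun κ : ℝ => -(1 + cos (8 * π / κ) - 2 / (1 - μ * (4 / κ - 1))) / sin (8 * π / κ))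
      (𝓝[<] 4) (𝓝 (μ / π)) := by
  have hlim := tendsto_div_nhdsNE_of_hasDerivAt (hasDerivAt_trunk_factor μ)
    hasDerivAt_sin_eight_pi_div (by norm_num [eight_pi_div_four])
    (by simp [eight_pi_div_four]) (by simp [pi_ne_zero])
  have hval : -(μ / 2 / -(π / 2)) = μ / π := by field_simp
  simpa only [neg_div, hval] using hlim.neg.mono_left (nhdsLT_le_nhdsNE 4)

theorem sin_eight_pi_div_ne_zero {κ : ℝ} (hκ : κ ∈ Set.Ioo (8 / 3 : ℝ) 4) :
    sin (8 * π / κ) ≠ 0 := by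
  have hκ0 : 0 < κ := by linarith [hκ.1]
  have hlo : 2 * π < 8 * π / κ := by rw [lt_div_iff₀ hκ0]; nlinarith [hκ.2, pi_pos]
  have hhi : 8 * π / κ < 3 * π := by rw [div_lt_iff₀ hκ0]; nlinarith [hκ.1, pi_pos]
  rw [← sin_sub_two_pi]
  exact (sin_pos_of_pos_of_lt_pi (by linarith) (by linarith)).ne'

theorem trunk_exponent_eq_arctan {μ κ r : ℝ} (hκ : κ ∈ Set.Ioo (8 / 3 : ℝ) 4)
    (hr : r ∈ Set.Ioo (16 / κ - 6) 0)
    (heq : sin (π * r / 2) * (1 + cos (8 * π / κ) - 2 / (1 - μ * (4 / κ - 1)))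
      = cos (π * r / 2) * sin (8 * π / κ)) :
    r = 2 / π * arctan (-(1 + cos (8 * π / κ) - 2 / (1 - μ * (4 / κ - 1))) / sin (8 * π / κ))
      - 1 := by
  have hr2 : -2 < r := by
    have : 4 < 16 / κ := by rw [lt_div_iff₀ (by linarith [hκ.1])]; linarith [hκ.2]
    linarith [hr.1]
  have hx : π * r / 2 ∈ Set.Ioo (-π) 0 :=
    ⟨by nlinarith [pi_pos], by nlinarith [pi_pos, hr.2]⟩
  rw [arctan_neg_div_eq_add_pi_div_two hx (sin_eight_pi_div_ne_zero hκ) heq]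
  field_simp
  ring

theorem eventually_abs_mul_four_div_sub_one_lt_one (μ : ℝ) :
    ∀ᶠ κ : ℝ in 𝓝[<] 4, |μ| * (4 / κ - 1) < 1 := by
  have hlim : Tendsto (fun κ : ℝ => |μ| * (4 / κ - 1)) (𝓝 4) (𝓝 (|μ| * (4 / 4 - 1))) :=
    tendsto_const_nhds.mul ((tendsto_const_nhds.div tendsto_id four_ne_zero).sub
      tendsto_const_nhds)
  rw [div_self four_ne_zero, sub_self, mul_zero] at hlim
  exact (hlim.eventually_lt_const one_pos).filter_mono nhdsWithin_le_nhds

/-- Limit of the trunk exponents: if `β(κ) = μ(4/κ − 1)` and `ρ'(κ)` is the unique root in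
`(16/κ − 6, 0)` of the trunk equation, then `ρ'(κ) → (2/π) arctan(μ/π) − 1` as `κ ↑ 4`. -/
theorem stmt14 (μ : ℝ) (ρ' : ℝ → ℝ)
    (h : ∀ κ : ℝ, κ ∈ Set.Ioo (8/3 : ℝ) 4 → |μ| * (4 / κ - 1) < 1 →
      ρ' κ ∈ Set.Ioo (16 / κ - 6) 0 ∧
      Real.sin (π * ρ' κ / 2)
          * (1 + Real.cos (8 * π / κ) - 2 / (1 - μ * (4 / κ - 1)))
        = Real.cos (π * ρ' κ / 2) * Real.sin (8 * π / κ)) :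
    Filter.Tendsto ρ' (nhdsWithin 4 (Set.Iio 4))
      (nhds (2 / π * Real.arctan (μ / π) - 1)) := by
  have hlim := ((continuous_arctan.tendsto _).comp (tendsto_trunk_tan μ)).const_mul (2 / π)
    |>.sub_const 1
  refine hlim.congr' ?_
  filter_upwards [Ioo_mem_nhdsLT (by norm_num : (8 / 3 : ℝ) < 4),
    eventually_abs_mul_four_div_sub_one_lt_one μ] with κ hκ hμ
  obtain ⟨hr, heq⟩ := h κ hκ hμ
  exact (trunk_exponent_eq_arctan hκ hr heq).symm
end

section
/- Fix ρ ∈ (−2, 0) and set μ̃ = −π·cot(πρ/2). For each κ ∈ (8/3, 4) with |μ̃|·(4/κ − 1) < 1, let β(κ) = μ̃(4/κ − 1) and let ρ'(κ) be the unique ρ' ∈ (16/κ − 6, 0) satisfying sin(πρ'/2) · ( 1 + cos(8π/κ) − 2/(1−β(κ)) ) = cos(πρ'/2) · sin(8π/κ). Then ρ'(κ) → ρ as κ ↑ 4. -/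
/-!
Where `sin (π ρ'/2)` and `sin (8π/κ)` do not vanish, the defining equation says
`cot (π ρ'(κ)/2) = N(κ) / D(κ)` with `N(κ) = 1 + cos (8π/κ) - 2/(1 - β(κ))` and
`D(κ) = sin (8π/κ)`. Both vanish at `κ = 4`, so the quotient tends to
`N'(4) / D'(4) = (μ̃/2) / (-π/2) = cot (πρ/2)`. Since `x ↦ cot (πx/2)` is strictly decreasing
on `(-2, 0)`, which contains every `ρ'(κ)` for `κ < 4`, this forces `ρ'(κ) → ρ`.
-/

open Real Filter Set Topology

theorem StrictAntiOn.tendsto_of_tendsto_comp {α β ι : Type*} [LinearOrder α] [TopologicalSpace α]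
    [OrderTopology α] [DenselyOrdered α] [LinearOrder β] [TopologicalSpace β] [OrderTopology β]
    {f : α → β} {a b x : α} (hf : StrictAntiOn f (Ioo a b)) (hx : x ∈ Ioo a b)
    {u : ι → α} {l : Filter ι} (hu : ∀ᶠ i in l, u i ∈ Ioo a b)
    (hfu : Tendsto (fun i => f (u i)) l (𝓝 (f x))) : Tendsto u l (𝓝 x) := by
  rw [tendsto_order]
  constructor
  · intro y hy
    obtain ⟨c, hc, hcx⟩ := exists_between (max_lt hx.1 hy)
    have hcmem : c ∈ Ioo a b := ⟨(le_max_left _ _).trans_lt hc, hcx.trans hx.2⟩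
    filter_upwards [hu, hfu.eventually_lt_const (hf hcmem hx hcx)] with i hui hfi
    exact (le_max_right _ _).trans_lt (hc.trans ((hf.lt_iff_gt hui hcmem).mp hfi))
  · intro y hy
    obtain ⟨c, hxc, hc⟩ := exists_between (lt_min hx.2 hy)
    have hcmem : c ∈ Ioo a b := ⟨hx.1.trans hxc, hc.trans_le (min_le_left _ _)⟩
    filter_upwards [hu, hfu.eventually_const_lt (hf hx hcmem hxc)] with i hui hfi
    exact ((hf.lt_iff_gt hcmem hui).mp hfi).trans (hc.trans_le (min_le_right _ _))

theorem tendsto_div_of_hasDerivAt_of_eq_zero {𝕜 : Type*} [NontriviallyNormedField 𝕜]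
    {f g : 𝕜 → 𝕜} {f' g' a : 𝕜} (hf : HasDerivAt f f' a) (hg : HasDerivAt g g' a)
    (hfa : f a = 0) (hga : g a = 0) (hg' : g' ≠ 0) :
    Tendsto (fun x => f x / g x) (𝓝[≠] a) (𝓝 (f' / g')) := by
  refine ((hasDerivAt_iff_tendsto_slope.mp hf).div
    (hasDerivAt_iff_tendsto_slope.mp hg) hg').congr' ?_
  filter_upwards [self_mem_nhdsWithin] with x hx
  rw [Pi.div_apply, slope_def_field, slope_def_field, hfa, hga, sub_zero, sub_zero,
    div_div_div_cancel_right₀ (sub_ne_zero.mpr hx)]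

namespace Real

theorem cot_eq_neg_tan_add_pi_div_two (x : ℝ) : cot x = -tan (x + π / 2) := by
  rw [cot_eq_cos_div_sin, tan_eq_sin_div_cos, sin_add_pi_div_two, cos_add_pi_div_two, div_neg,
    neg_neg]

theorem strictAntiOn_cot_Ioo_neg_pi_zero : StrictAntiOn cot (Ioo (-π) 0) := by
  intro x hx y hy hxy
  rw [cot_eq_neg_tan_add_pi_div_two, cot_eq_neg_tan_add_pi_div_two, neg_lt_neg_iff]
  exact strictMonoOn_tan ⟨by linarith [hx.1], by linarith [hx.2]⟩
    ⟨by linarith [hy.1], by linarith [hy.2]⟩ (by linarith)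

theorem cot_eq_div_of_sin_mul_eq_cos_mul {θ a b : ℝ} (hθ : sin θ ≠ 0) (hb : b ≠ 0)
    (h : sin θ * a = cos θ * b) : cot θ = a / b := by
  rw [cot_eq_cos_div_sin, div_eq_div_iff hθ hb]
  linarith

theorem strictAntiOn_cot_pi_mul_div_two :
    StrictAntiOn (fun x => cot (π * x / 2)) (Ioo (-2) 0) := by
  have hπ := pi_pos
  rintro x ⟨hx1, hx2⟩ y ⟨hy1, hy2⟩ hxy
  exact strictAntiOn_cot_Ioo_neg_pi_zero ⟨by nlinarith, by nlinarith⟩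
    ⟨by nlinarith, by nlinarith⟩ (by nlinarith)

theorem sin_pi_mul_div_two_neg {x : ℝ} (hx : x ∈ Ioo (-2) 0) : sin (π * x / 2) < 0 := by
  have hπ := pi_pos
  apply sin_neg_of_neg_of_neg_pi_lt <;> nlinarith [hx.1, hx.2]

end Real

theorem sin_eight_pi_div_pos {κ : ℝ} (hκ : κ ∈ Ioo (8 / 3) 4) : 0 < sin (8 * π / κ) := by
  have hπ := pi_pos
  have hκ0 : 0 < κ := by linarith [hκ.1]
  rw [← sin_sub_two_pi]
  apply sin_pos_of_pos_of_lt_pi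
  · have : 2 * π < 8 * π / κ := by rw [lt_div_iff₀ hκ0]; nlinarith [hκ.2]
    linarith
  · have : 8 * π / κ < 3 * π := by rw [div_lt_iff₀ hκ0]; nlinarith [hκ.1]
    linarith

/-- The value of `cot (π ρ'/2)` forced by the trunk-exponent equation for parameters `β`, `κ`. -/
noncomputable def trunkCot (β κ : ℝ) : ℝ :=
  (1 + cos (8 * π / κ) - 2 / (1 - β)) / sin (8 * π / κ)

theorem tendsto_trunkCot_nhdsNE_four (m : ℝ) :
    Tendsto (fun κ => trunkCot (m * (4 / κ - 1)) κ) (𝓝[≠] 4) (𝓝 (-m / π)) := by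
  unfold trunkCot
  have h2π : 8 * π / 4 = 2 * π := by ring
  have hinv : HasDerivAt (fun κ : ℝ => κ⁻¹) (-1 / 16) 4 :=
    (hasDerivAt_inv (by norm_num)).congr_deriv (by norm_num)
  have hangle : HasDerivAt (fun κ : ℝ => 8 * π / κ) (-π / 2) 4 := by
    simpa only [← div_eq_mul_inv] using (hinv.const_mul (8 * π)).congr_deriv (by ring)
  have hden : HasDerivAt (fun κ : ℝ => 1 - m * (4 / κ - 1)) (m / 4) 4 := by
    simpa only [← div_eq_mul_inv] using
      (((hinv.const_mul 4).sub_const 1).const_mul m).const_sub 1 |>.congr_deriv (by ring)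
  have hN :
      HasDerivAt (fun κ => 1 + cos (8 * π / κ) - 2 / (1 - m * (4 / κ - 1))) (m / 2) 4 := by
    refine ((hangle.cos.const_add 1).sub
      ((hasDerivAt_const (4 : ℝ) (2 : ℝ)).div hden (by norm_num))).congr_deriv ?_
    rw [h2π, sin_two_pi]
    ring
  have hD : HasDerivAt (fun κ => sin (8 * π / κ)) (-π / 2) 4 := by
    convert hangle.sin using 1
    rw [h2π, cos_two_pi, one_mul]
  convert tendsto_div_of_hasDerivAt_of_eq_zero hN hD ?_ ?_ (by simp [pi_ne_zero]) using 2
  · field_simp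
  · rw [h2π, cos_two_pi]; norm_num
  · rw [h2π, sin_two_pi]

/-- For `ρ ∈ (−2,0)` and `μ̃ = −π cot(πρ/2)`, the trunk exponents `ρ'(κ)` for the asymmetry
parameters `β(κ) = μ̃(4/κ − 1)` converge to `ρ` as `κ ↑ 4`. -/
theorem stmt15 (ρ : ℝ) (hρ : ρ ∈ Set.Ioo (-2 : ℝ) 0)
    (μt : ℝ) (hμ : μt = -π * Real.cot (π * ρ / 2))
    (ρ' : ℝ → ℝ)
    (h : ∀ κ : ℝ, κ ∈ Set.Ioo (8/3 : ℝ) 4 → |μt| * (4 / κ - 1) < 1 →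
      ρ' κ ∈ Set.Ioo (16 / κ - 6) 0 ∧
      Real.sin (π * ρ' κ / 2)
          * (1 + Real.cos (8 * π / κ) - 2 / (1 - μt * (4 / κ - 1)))
        = Real.cos (π * ρ' κ / 2) * Real.sin (8 * π / κ)) :
    Filter.Tendsto ρ' (nhdsWithin 4 (Set.Iio 4)) (nhds ρ) := by
  have hβ : ∀ᶠ κ in 𝓝[<] (4 : ℝ), |μt| * (4 / κ - 1) < 1 := by
    have : ContinuousAt (fun κ : ℝ => |μt| * (4 / κ - 1)) 4 := by fun_prop (disch := norm_num)
    exact (this.tendsto.mono_left nhdsWithin_le_nhds).eventually_lt_const (by norm_num)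
  have hev : ∀ᶠ κ in 𝓝[<] (4 : ℝ),
      ρ' κ ∈ Ioo (-2) 0 ∧ cot (π * ρ' κ / 2) = trunkCot (μt * (4 / κ - 1)) κ := by
    filter_upwards [Ioo_mem_nhdsLT (by norm_num : (8 / 3 : ℝ) < 4), hβ] with κ hκ hβκ
    obtain ⟨⟨hlow, hneg⟩, heq⟩ := h κ hκ hβκ
    have : (4 : ℝ) < 16 / κ := by rw [lt_div_iff₀ (by linarith [hκ.1])]; linarith [hκ.2]
    have hmem : ρ' κ ∈ Ioo (-2) 0 := ⟨by linarith, hneg⟩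
    exact ⟨hmem, cot_eq_div_of_sin_mul_eq_cos_mul (sin_pi_mul_div_two_neg hmem).ne
      (sin_eight_pi_div_pos hκ).ne' heq⟩
  have hlim := (tendsto_trunkCot_nhdsNE_four μt).mono_left
    (nhdsWithin_mono 4 fun _ hκ => ne_of_lt hκ)
  rw [show -μt / π = cot (π * ρ / 2) by rw [hμ]; field_simp] at hlim
  exact strictAntiOn_cot_pi_mul_div_two.tendsto_of_tendsto_comp hρ (hev.mono fun _ h => h.1)
    (hlim.congr' (hev.mono fun _ h => h.2.symm))
end
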